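/- arXiv:math/0106082 — 3 statements merged into one kernel-verified Lean document; each statement's English description precedes it below -/
import Mathlib

section
/- If U is a unidependent set of a matroid M and x ∈ U is a non-loop element, then U \ {x} is a unidependent set of the contraction M/x. -/
open Set

/-- A circuit of a matroid: a minimal dependent set. -/
def IsCircuit {α : Type*} (M : Matroid α) (C : Set α) : Prop :=
  M.Dep C ∧ ∀ D, D ⊂ C → ¬ M.Dep D

/-!
A set `U` contains exactly one circuit iff it has a dependent subset `C` lying inside every
dependent subset of `U` (then `C` is that circuit). In `M/x` the dependent sets avoiding `x`
are the sets `D` with `insert x D` dependent in `M`, so `C \ {x}` plays the role of `C` for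
`U \ {x}` in `M/x`.
-/

lemma isCircuit_iff_matroid_isCircuit {α : Type*} {M : Matroid α} {C : Set α} :
    IsCircuit M C ↔ M.IsCircuit C := by
  rw [Matroid.isCircuit_iff, IsCircuit]
  refine and_congr_right fun _ ↦ ⟨fun hmin D hD hDC ↦ ?_, fun hmin D hDC hD ↦ ?_⟩
  · by_contra hne
    exact hmin D (hDC.ssubset_of_ne hne) hD
  · exact hDC.ne (hmin hD hDC.subset)

namespace Matroid

variable {α : Type*} {M : Matroid α} {U : Set α}

lemma existsUnique_isCircuit_subset_iff :
    (∃! C, M.IsCircuit C ∧ C ⊆ U) ↔ ∃ C ⊆ U, M.Dep C ∧ ∀ D ⊆ U, M.Dep D → C ⊆ D := by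
  constructor
  · rintro ⟨C, ⟨hC, hCU⟩, huniq⟩
    refine ⟨C, hCU, hC.dep, fun D hDU hD ↦ ?_⟩
    obtain ⟨C', hC'D, hC'⟩ := hD.exists_isCircuit_subset
    rwa [← huniq C' ⟨hC', hC'D.trans hDU⟩]
  · rintro ⟨C, hCU, hC, hmin⟩
    have hCcirc : M.IsCircuit C :=
      isCircuit_iff.2 ⟨hC, fun D hD hDC ↦ hDC.antisymm (hmin D (hDC.trans hCU) hD)⟩
    exact ⟨C, ⟨hCcirc, hCU⟩, fun C' ⟨hC', hC'U⟩ ↦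
      (hC'.eq_of_dep_subset hC (hmin C' hC'U hC'.dep)).symm⟩

lemma dep_iff_dep_insert_of_indep_iff {N : Matroid α} {x : α} {D : Set α} (hxE : x ∈ M.E)
    (hNE : N.E = M.E \ {x}) (hNI : ∀ I, N.Indep I ↔ x ∉ I ∧ M.Indep (insert x I))
    (hxD : x ∉ D) : N.Dep D ↔ M.Dep (insert x D) := by
  rw [Matroid.dep_iff, Matroid.dep_iff, hNI, hNE, insert_subset_iff, subset_sdiff,
    disjoint_singleton_right]
  tauto

end Matroid

theorem unidependent_contract_general {α : Type*} (M : Matroid α)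
    (x : α)
    (U : Set α) (hUE : U ⊆ M.E) (hxU : x ∈ U)
    (hU : ∃! C, IsCircuit M C ∧ C ⊆ U)
    (N : Matroid α) (hNE : N.E = M.E \ {x})
    (hNI : ∀ I, N.Indep I ↔ x ∉ I ∧ M.Indep (insert x I)) :
    ∃! C, IsCircuit N C ∧ C ⊆ U \ {x} := by
  simp_rw [isCircuit_iff_matroid_isCircuit, Matroid.existsUnique_isCircuit_subset_iff] at hU ⊢
  obtain ⟨C, hCU, hC, hmin⟩ := hU
  have hxE : x ∈ M.E := hUE hxU
  have hdep {D : Set α} (hxD : x ∉ D) : N.Dep D ↔ M.Dep (insert x D) :=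
    Matroid.dep_iff_dep_insert_of_indep_iff hxE hNE hNI hxD
  refine ⟨C \ {x}, sdiff_subset_sdiff_left hCU, ?_, fun D hDU hD ↦ ?_⟩
  · rw [hdep (by simp), insert_sdiff_singleton]
    exact hC.superset (subset_insert x C) (insert_subset hxE hC.subset_ground)
  · have hxD : x ∉ D := fun h ↦ (hDU h).2 rfl
    rw [sdiff_singleton_subset_iff]
    exact hmin _ (insert_subset hxU (hDU.trans sdiff_subset)) ((hdep hxD).1 hD)

/-- If `U` is a unidependent set of `M` (contains exactly one circuit) and `x ∈ U`
is a non-loop element, then `U \ {x}` is a unidependent set of the contraction `M/x`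
(here `N` is the contraction `M/x`, characterized by its ground set and
independent sets). -/
theorem unidependent_contract {α : Type*} (M : Matroid α) (hE : M.E.Finite)
    (x : α) (hx : M.Indep {x})
    (U : Set α) (hUE : U ⊆ M.E) (hxU : x ∈ U)
    (hU : ∃! C, IsCircuit M C ∧ C ⊆ U)
    (N : Matroid α) (hNE : N.E = M.E \ {x})
    (hNI : ∀ I, N.Indep I ↔ x ∉ I ∧ M.Indep (insert x I)) :
    ∃! C, IsCircuit N C ∧ C ⊆ U \ {x} :=
  unidependent_contract_general M x U hUE hxU hU N hNE hNI
end

section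
/- Let M be a simple matroid on the ground set {1,...,n}. Then the family of NBC sets of M is the disjoint union of the NBC sets of M\n and the sets I ∪ {n} where I ranges over the NBC sets of M/n. Consequently, for each ℓ, |NBC_ℓ(M)| = |NBC_ℓ(M\n)| + |NBC_{ℓ-1}(M/n)|. -/
/-!
Split the NBC sets `X` of `M` by whether `n ∈ X`. Since `n` is the largest element, it is never
the minimum of a circuit with nonempty broken circuit, so broken circuits avoiding `n` come from
circuits avoiding `n`, and the NBC sets without `n` are those of `M \ n`. Otherwise, one tool does
all the work: if `X` is NBC and `D ⊆ X ∪ {m}` is dependent with all elements `≥ m`, then a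
circuit inside `D` either lies in `X` or has its broken circuit in `X`, unless it is `{m}`.
Adding `n` to a circuit of `M / n`, or removing `n` from a circuit of `M`, produces such a `D`.
A loop `{m}` of `M / n` would make `m` parallel to `n`, which simplicity excludes.
-/

open Set

def BrokenCircuit {α : Type*} [LinearOrder α] (M : Matroid α) (B : Set α) : Prop :=
  ∃ C m, IsCircuit M C ∧ m ∈ C ∧ (∀ y ∈ C, m ≤ y) ∧ (C \ {m}).Nonempty ∧ B = C \ {m}

def NBC {α : Type*} [LinearOrder α] (M : Matroid α) (X : Set α) : Prop :=
  M.Indep X ∧ ∀ B, BrokenCircuit M B → ¬ B ⊆ X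

section

variable {α : Type*}

theorem isCircuit_iff_isCircuit {M : Matroid α} {C : Set α} : IsCircuit M C ↔ M.IsCircuit C := by
  rw [Matroid.IsCircuit, minimal_iff_forall_ssubset]
  rfl

theorem ncard_sep_eq_add_ncard_of_split {E : Set α} (hE : E.Finite) {n : α} {ℓ : ℕ} (hℓ : 1 ≤ ℓ)
    {𝒜 ℬ 𝒞 : Set (Set α)} (hsplit : ∀ X, X ∈ 𝒜 ↔ X ∈ ℬ ∨ ∃ I ∈ 𝒞, X = insert n I)
    (hℬ : ∀ X ∈ ℬ, X ⊆ E \ {n}) (h𝒞 : ∀ I ∈ 𝒞, I ⊆ E \ {n}) :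
    {X ∈ 𝒜 | X.ncard = ℓ}.ncard =
      {X ∈ ℬ | X.ncard = ℓ}.ncard + {I ∈ 𝒞 | I.ncard = ℓ - 1}.ncard := by
  have hn𝒞 : ∀ I ∈ 𝒞, n ∉ I := fun I hI hnI => (h𝒞 I hI hnI).2 rfl
  have hcard : ∀ I ∈ 𝒞, (insert n I).ncard = I.ncard + 1 := fun I hI =>
    ncard_insert_of_notMem (hn𝒞 I hI) (hE.subset ((h𝒞 I hI).trans sdiff_subset))
  have heq : {X ∈ 𝒜 | X.ncard = ℓ} =
      {X ∈ ℬ | X.ncard = ℓ} ∪ insert n '' {I ∈ 𝒞 | I.ncard = ℓ - 1} := by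
    ext X
    simp only [mem_sep_iff, hsplit X, mem_union, mem_image]
    constructor
    · rintro ⟨hX | ⟨I, hI, rfl⟩, hXℓ⟩
      · exact Or.inl ⟨hX, hXℓ⟩
      · exact Or.inr ⟨I, ⟨hI, by rw [hcard I hI] at hXℓ; omega⟩, rfl⟩
    · rintro (⟨hX, hXℓ⟩ | ⟨I, ⟨hI, hIℓ⟩, rfl⟩)
      · exact ⟨Or.inl hX, hXℓ⟩
      · exact ⟨Or.inr ⟨I, hI, rfl⟩, by rw [hcard I hI]; omega⟩
  have hdisj : Disjoint {X ∈ ℬ | X.ncard = ℓ} (insert n '' {I ∈ 𝒞 | I.ncard = ℓ - 1}) := by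
    rw [disjoint_left]
    rintro _ ⟨hX, -⟩ ⟨I, -, rfl⟩
    exact (hℬ _ hX (mem_insert n I)).2 rfl
  have hinj : InjOn (insert n) {I ∈ 𝒞 | I.ncard = ℓ - 1} := fun I hI J hJ hIJ => by
    rw [← insert_sdiff_self_of_notMem (hn𝒞 I hI.1), hIJ, insert_sdiff_self_of_notMem (hn𝒞 J hJ.1)]
  have hfin : ∀ 𝒮 : Set (Set α), (∀ X ∈ 𝒮, X ⊆ E \ {n}) → 𝒮.Finite := fun 𝒮 h𝒮 =>
    (hE.sdiff.finite_subsets).subset h𝒮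
  rw [heq, ncard_union_eq hdisj (hfin _ fun X hX => hℬ X hX.1)
      ((hfin _ fun I hI => h𝒞 I hI.1).image _), hinj.ncard_image]

theorem dep_iff_dep_insert {M N : Matroid α} {n : α} (hnE : n ∈ M.E) (hNE : N.E = M.E \ {n})
    (hNI : ∀ I, N.Indep I ↔ n ∉ I ∧ M.Indep (insert n I)) {D : Set α} :
    N.Dep D ↔ M.Dep (insert n D) ∧ n ∉ D := by
  rw [Matroid.dep_iff, Matroid.dep_iff, hNI, hNE, insert_subset_iff, subset_sdiff,
    disjoint_singleton_right]
  tauto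

variable [LinearOrder α]

theorem NBC.not_dep_of_subset_insert {K : Matroid α} {X D : Set α} {m : α} (hX : NBC K X)
    (hm : K.Indep {m}) (hDX : D ⊆ insert m X) (hDm : ∀ y ∈ D, m ≤ y) : ¬ K.Dep D := by
  intro hD
  obtain ⟨C, hCD, hC⟩ := hD.exists_isCircuit_subset
  by_cases hmC : m ∈ C
  · have hne : (C \ {m}).Nonempty := by
      rw [nonempty_iff_ne_empty, Ne, sdiff_eq_empty]
      exact fun hCm => hC.not_indep (hm.subset hCm)
    refine hX.2 _ ⟨C, m, isCircuit_iff_isCircuit.2 hC, hmC, fun y hy => hDm y (hCD hy), hne, rfl⟩ ?_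
    exact fun y hy => (hDX (hCD hy.1)).resolve_left hy.2
  · refine hC.not_indep (hX.1.subset fun y hy => ?_)
    exact (hDX (hCD hy)).resolve_left (ne_of_mem_of_not_mem hy hmC)

theorem BrokenCircuit.of_restrict {M : Matroid α} {R B : Set α} (hR : R ⊆ M.E)
    (hB : BrokenCircuit (M.restrict R) B) : BrokenCircuit M B := by
  obtain ⟨C, m, hC, hmC, hmin, hne, rfl⟩ := hB
  rw [isCircuit_iff_isCircuit, Matroid.restrict_isCircuit_iff hR] at hC
  exact ⟨C, m, isCircuit_iff_isCircuit.2 hC.1, hmC, hmin, hne, rfl⟩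

theorem BrokenCircuit.restrict {M : Matroid α} {R B : Set α} (hR : R ⊆ M.E)
    (hRlt : ∀ x ∈ R, ∀ y ∈ M.E \ R, x < y) (hB : BrokenCircuit M B) (hBR : B ⊆ R) :
    BrokenCircuit (M.restrict R) B := by
  obtain ⟨C, m, hC, hmC, hmin, ⟨y, hy⟩, rfl⟩ := hB
  rw [isCircuit_iff_isCircuit] at hC
  have hmR : m ∈ R := by
    by_contra hmR
    exact (hmin y hy.1).not_gt (hRlt y (hBR hy) m ⟨hC.subset_ground hmC, hmR⟩)
  have hCR : C ⊆ R := fun x hx => if h : x = m then h ▸ hmR else hBR ⟨hx, h⟩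
  refine ⟨C, m, ?_, hmC, hmin, ⟨y, hy⟩, rfl⟩
  rw [isCircuit_iff_isCircuit, Matroid.restrict_isCircuit_iff hR]
  exact ⟨hC, hCR⟩

theorem nbc_restrict_iff {M : Matroid α} {R X : Set α} (hR : R ⊆ M.E)
    (hRlt : ∀ x ∈ R, ∀ y ∈ M.E \ R, x < y) : NBC (M.restrict R) X ↔ NBC M X ∧ X ⊆ R := by
  rw [NBC, NBC, Matroid.restrict_indep_iff]
  constructor
  · rintro ⟨⟨hX, hXR⟩, hbc⟩
    exact ⟨⟨hX, fun B hB hBX => hbc B (hB.restrict hR hRlt (hBX.trans hXR)) hBX⟩, hXR⟩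
  · rintro ⟨⟨hX, hbc⟩, hXR⟩
    exact ⟨⟨hX, hXR⟩, fun B hB => hbc B (hB.of_restrict hR)⟩
section Contraction

variable {M N : Matroid α} {n : α}

theorem NBC.sdiff_singleton_of_contract (hnE : n ∈ M.E) (hn : ∀ y ∈ M.E, y ≤ n)
    (hNE : N.E = M.E \ {n}) (hNI : ∀ I, N.Indep I ↔ n ∉ I ∧ M.Indep (insert n I))
    {X : Set α} (hX : NBC M X) (hnX : n ∈ X) : NBC N (X \ {n}) := by
  refine ⟨(hNI _).2 ⟨fun h => h.2 rfl, by
    rw [insert_sdiff_singleton, insert_eq_of_mem hnX]; exact hX.1⟩, ?_⟩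
  rintro _ ⟨C, m, hC, hmC, hmin, hne, rfl⟩ hCX
  rw [isCircuit_iff_isCircuit] at hC
  have hmE : m ∈ M.E := (hNE ▸ hC.subset_ground hmC).1
  -- `{m} ⊂ C` is independent in `N`, so `m` is not a loop of `M`
  have hm : M.Indep {m} := ((hNI {m}).1 (hC.ssubset_indep
    (ssubset_of_subset_not_subset (singleton_subset_iff.2 hmC) fun h => hne.ne_empty
      (sdiff_eq_empty.2 h)))).2.subset (subset_insert n {m})
  refine hX.not_dep_of_subset_insert hm ?_ ?_ ((dep_iff_dep_insert hnE hNE hNI).1 hC.dep).1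
  · rintro y (rfl | hyC)
    · exact mem_insert_of_mem m hnX
    · exact if hym : y = m then hym ▸ mem_insert y X else mem_insert_of_mem m (hCX ⟨hyC, hym⟩).1
  · rintro y (rfl | hyC)
    · exact hn m hmE
    · exact hmin y hyC

theorem NBC.insert_of_contract (hnE : n ∈ M.E) (hn : ∀ y ∈ M.E, y ≤ n)
    (hpar : ∀ y ∈ M.E, y ≠ n → M.Indep {n, y})
    (hNE : N.E = M.E \ {n}) (hNI : ∀ I, N.Indep I ↔ n ∉ I ∧ M.Indep (insert n I))
    {I : Set α} (hI : NBC N I) : NBC M (insert n I) := by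
  refine ⟨((hNI I).1 hI.1).2, ?_⟩
  rintro _ ⟨C, m, hC, hmC, hmin, ⟨z, hz⟩, rfl⟩ hCI
  rw [isCircuit_iff_isCircuit] at hC
  have hmn : m ≠ n := by
    rintro rfl
    exact hz.2 (le_antisymm (hn z (hC.subset_ground hz.1)) (hmin z hz.1))
  have hm : N.Indep {m} :=
    (hNI {m}).2 ⟨fun h => hmn h.symm, hpar m (hC.subset_ground hmC) hmn⟩
  have hdep : N.Dep (C \ {n}) := (dep_iff_dep_insert hnE hNE hNI).2
    ⟨hC.dep.superset (by rw [insert_sdiff_singleton]; exact subset_insert n C)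
      (insert_subset hnE (sdiff_subset.trans hC.subset_ground)), fun h => h.2 rfl⟩
  refine hI.not_dep_of_subset_insert hm ?_ (fun y hy => hmin y hy.1) hdep
  rintro y ⟨hyC, hyn⟩
  exact if hym : y = m then hym ▸ mem_insert y I else
    mem_insert_of_mem m ((hCI ⟨hyC, hym⟩).resolve_left hyn)

theorem nbc_iff_nbc_restrict_or_insert (hnE : n ∈ M.E) (hn : ∀ y ∈ M.E, y ≤ n)
    (hpar : ∀ y ∈ M.E, y ≠ n → M.Indep {n, y})
    (hNE : N.E = M.E \ {n}) (hNI : ∀ I, N.Indep I ↔ n ∉ I ∧ M.Indep (insert n I))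
    (X : Set α) :
    NBC M X ↔ NBC (M.restrict (M.E \ {n})) X ∨ ∃ I, NBC N I ∧ X = insert n I := by
  have hlt : ∀ x ∈ M.E \ {n}, ∀ y ∈ M.E \ (M.E \ {n}), x < y := by
    rintro x ⟨hxE, hxn⟩ y ⟨hyE, hy⟩
    obtain rfl : y = n := by_contra fun h => hy ⟨hyE, h⟩
    exact (hn x hxE).lt_of_ne hxn
  rw [nbc_restrict_iff sdiff_subset hlt]
  constructor
  · intro hX
    by_cases hnX : n ∈ X
    · exact Or.inr ⟨X \ {n}, hX.sdiff_singleton_of_contract hnE hn hNE hNI hnX,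
        (insert_sdiff_self_of_mem hnX).symm⟩
    · exact Or.inl ⟨hX, subset_sdiff_singleton hX.1.subset_ground hnX⟩
  · rintro (hX | ⟨I, hI, rfl⟩)
    · exact hX.1
    · exact hI.insert_of_contract hnE hn hpar hNE hNI

end Contraction

end

/-- For a simple matroid `M` on a linearly ordered finite ground set with maximum
element `n`, the family of NBC sets of `M` is the disjoint union of the NBC sets of
the deletion `M \ n` and the sets `I ∪ {n}` for `I` an NBC set of the contraction
`M/n` (here `N`); consequently `|NBC_ℓ(M)| = |NBC_ℓ(M \ n)| + |NBC_{ℓ-1}(M/n)|`. -/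
theorem nbc_partition {α : Type*} [LinearOrder α] (M : Matroid α)
    (hE : M.E.Finite)
    (hsimple : (∀ x ∈ M.E, M.Indep {x}) ∧
      ∀ x ∈ M.E, ∀ y ∈ M.E, x ≠ y → M.Indep {x, y})
    (n : α) (hnE : n ∈ M.E) (hn : ∀ y ∈ M.E, y ≤ n)
    (N : Matroid α) (hNE : N.E = M.E \ {n})
    (hNI : ∀ I, N.Indep I ↔ n ∉ I ∧ M.Indep (insert n I)) :
    ({X | NBC M X} =
        {X | NBC (M.restrict (M.E \ {n})) X} ∪ {Y | ∃ I, NBC N I ∧ Y = insert n I}) ∧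
    (Disjoint {X | NBC (M.restrict (M.E \ {n})) X} {Y | ∃ I, NBC N I ∧ Y = insert n I}) ∧
    (∀ ℓ : ℕ, 1 ≤ ℓ →
      {X | NBC M X ∧ X.ncard = ℓ}.ncard =
        {X | NBC (M.restrict (M.E \ {n})) X ∧ X.ncard = ℓ}.ncard +
          {I | NBC N I ∧ I.ncard = ℓ - 1}.ncard) := by
  have hsplit := nbc_iff_nbc_restrict_or_insert hnE hn (fun y hy hyn => hsimple.2 n hnE y hy hyn.symm) hNE hNI
  have hdel : ∀ X, NBC (M.restrict (M.E \ {n})) X → X ⊆ M.E \ {n} := fun X hX =>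
    (Matroid.restrict_indep_iff.1 hX.1).2
  have hcon : ∀ I, NBC N I → I ⊆ M.E \ {n} := fun I hI => hNE ▸ hI.1.subset_ground
  refine ⟨Set.ext hsplit, ?_, fun ℓ hℓ => ?_⟩
  · rw [disjoint_left]
    rintro _ hX ⟨I, -, rfl⟩
    exact (hdel _ hX (mem_insert n I)).2 rfl
  · exact ncard_sep_eq_add_ncard_of_split (𝒜 := {X | NBC M X}) hE hℓ hsplit hdel hcon
end

section
/- Let I and J be two NBC sets of the same cardinality ℓ of a matroid M (with linearly ordered ground set), listed in increasing order as I = (i_1 < ... < i_ℓ) and J = (j_1, ..., j_ℓ) after applying a permutation τ. If the flags of flats cl({i_ℓ}) ⊆ cl({i_{ℓ-1}, i_ℓ}) ⊆ ... ⊆ cl(I) and cl({j_{τ(ℓ)}}) ⊆ cl({j_{τ(ℓ-1)}, j_{τ(ℓ)}}) ⊆ ... ⊆ cl(J) coincide for some permutation τ of {1,...,ℓ}, then I = J. -/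
/-
In an NBC set `X`, a non-loop `y` spanned by `S ⊆ X` is bounded below by an element of `S`:
otherwise `y` is the minimum of its fundamental circuit in `insert y S`, and the corresponding
broken circuit lies in `S`. Hence if two NBC subsets have the same closure, the minimum of one
is spanned by the other and must belong to it. Applied to the coinciding flags, every `i k`
lies in `J`, and `|J| ≤ ℓ = |I|`.
-/

open Set

section

variable {α : Type*}

lemma Matroid.IsCircuit.isCircuit {M : Matroid α} {C : Set α} (hC : M.IsCircuit C) :
    _root_.IsCircuit M C :=
  ⟨hC.dep, fun _ hDC => hC.not_prop_of_ssubset hDC⟩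

namespace NBC

variable [LinearOrder α] {M : Matroid α} {X Y S T : Set α}

lemma exists_le_of_mem_closure {y : α} (hX : NBC M X) (hSX : S ⊆ X) (hy : M.IsNonloop y)
    (hyS : y ∈ M.closure S) : ∃ s ∈ S, s ≤ y := by
  by_contra! hlt
  have hy_notMem : y ∉ S := fun h => (hlt y h).false
  set C := M.fundCircuit y S
  have hC : M.IsCircuit C := (hX.1.subset hSX).fundCircuit_isCircuit hyS hy_notMem
  have hCS : C \ {y} ⊆ S := sdiff_singleton_subset_iff.2 (M.fundCircuit_subset_insert y S)
  have hmin : ∀ z ∈ C, y ≤ z := fun z hz =>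
    (eq_or_ne z y).elim (·.ge) fun hzy => (hlt z (hCS ⟨hz, hzy⟩)).le
  have hne : (C \ {y}).Nonempty := by
    rw [nonempty_iff_ne_empty, Ne, sdiff_eq_empty]
    intro hCy
    have hCeq : C = {y} := hCy.antisymm (singleton_subset_iff.2 (M.mem_fundCircuit y S))
    exact hy.not_isLoop (Matroid.singleton_isCircuit.1 (hCeq ▸ hC))
  exact hX.2 _ ⟨C, y, hC.isCircuit, M.mem_fundCircuit y S, hmin, hne, rfl⟩ (hCS.trans hSX)

lemma mem_of_closure_eq {a : α} (hX : NBC M X) (hY : NBC M Y) (hSX : S ⊆ X) (hTY : T ⊆ Y)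
    (hST : M.closure S = M.closure T) (haS : a ∈ S) (ha : ∀ s ∈ S, a ≤ s) : a ∈ T := by
  have haX : M.IsNonloop a := hX.1.isNonloop_of_mem (hSX haS)
  obtain ⟨t, htT, hta⟩ :=
    hY.exists_le_of_mem_closure hTY haX (hST ▸ M.mem_closure_of_mem' haS haX.mem_ground)
  have htY : M.IsNonloop t := hY.1.isNonloop_of_mem (hTY htT)
  obtain ⟨s, hsS, hst⟩ :=
    hX.exists_le_of_mem_closure hSX htY (hST ▸ M.mem_closure_of_mem' htT htY.mem_ground)
  rwa [le_antisymm hta ((ha s hsS).trans hst)] at htT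

end NBC

end

theorem nbc_flag_eq_general {α : Type*} [LinearOrder α] (M : Matroid α)
    (ℓ : ℕ) (I J : Set α)
    (hI : NBC M I) (hJ : NBC M J)
    (i j : Fin ℓ → α) (hi : StrictMono i) (hiI : Set.range i = I)
    (hjJ : Set.range j = J)
    (hflag : ∀ k : Fin ℓ,
      M.closure (i '' {m | k ≤ m}) = M.closure (j '' {m | k ≤ m})) :
    I = J := by
  subst hiI hjJ
  have hIJ : range i ⊆ range j := by
    rintro _ ⟨k, rfl⟩
    obtain ⟨m, -, hm⟩ := hI.mem_of_closure_eq hJ (image_subset_range _ _)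
      (image_subset_range _ _) (hflag k) (mem_image_of_mem i (le_refl k))
      (by rintro _ ⟨m, hkm, rfl⟩; exact hi.monotone hkm)
    exact ⟨m, hm⟩
  refine eq_of_subset_of_ncard_le hIJ ?_ (finite_range j)
  calc (range j).ncard = (j '' univ).ncard := by rw [image_univ]
    _ ≤ (univ : Set (Fin ℓ)).ncard := ncard_image_le
    _ = (range i).ncard := by rw [ncard_univ, ncard_range_of_injective hi.injective]

/-- Let `I` and `J` be two NBC sets of cardinality `ℓ` of a matroid `M` on a linearly
ordered finite ground set, with `I` listed in increasing order by `i` and `J`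
enumerated (in some order, i.e. after a permutation `τ`) by `j`.  If the associated
flags of flats `cl(i '' {k,...,ℓ-1})` and `cl(j '' {k,...,ℓ-1})` coincide for all
`k`, then `I = J`. -/
theorem nbc_flag_eq {α : Type*} [LinearOrder α] (M : Matroid α)
    (hE : M.E.Finite) (ℓ : ℕ) (I J : Set α)
    (hI : NBC M I) (hJ : NBC M J) (hIc : I.ncard = ℓ) (hJc : J.ncard = ℓ)
    (i j : Fin ℓ → α) (hi : StrictMono i) (hiI : Set.range i = I)
    (hj : Function.Injective j) (hjJ : Set.range j = J)
    (hflag : ∀ k : Fin ℓ,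
      M.closure (i '' {m | k ≤ m}) = M.closure (j '' {m | k ≤ m})) :
    I = J :=
  nbc_flag_eq_general M ℓ I J hI hJ i j hi hiI hjJ hflag
end
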